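/- arXiv:1107.4976 — 4 statements merged into one kernel-verified Lean document; each statement's English description precedes it below -/
import Mathlib

section
/- (Corollary 1, TPBN ≡ NEG for a = 1.) Let b > 0, φ > 0. For every real θ, ∫₀¹ normalPDF(0, 1/ρ − 1)(θ) · f(ρ; 1, b, φ) dρ = ∫₀^∞ ∫₀^∞ normalPDF(0, τ)(θ) · λ e^(−λτ) · gammaPDF(b, φ)(λ) dλ dτ. That is, the TPB normal scale mixture with a = 1 equals the normal-exponential-gamma (NEG) prior, the hierarchy θ | τ ~ N(0, τ), τ ~ Exponential(λ), λ ~ Gamma(b, φ). -/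
open MeasureTheory Real

/-- The three-parameter beta (TPB) density with parameters `a`, `b`, `φ`. -/
noncomputable def tpb (a b φ x : ℝ) : ℝ :=
  (Real.Gamma (a + b) / (Real.Gamma a * Real.Gamma b)) * φ ^ b * x ^ (b - 1) *
    (1 - x) ^ (a - 1) * (1 + (φ - 1) * x) ^ (-(a + b))

/-- The Gamma density with shape `μ` and rate `ν`, for positive arguments. -/
noncomputable def gammaPDF (μ ν x : ℝ) : ℝ :=
  ν ^ μ * x ^ (μ - 1) * Real.exp (-ν * x) / Real.Gamma μ

/-- The centered normal density with variance `v`. -/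
noncomputable def normalPDF (v θ : ℝ) : ℝ :=
  (2 * Real.pi * v) ^ (-(1 : ℝ) / 2) * Real.exp (-θ ^ 2 / (2 * v))

/-! Substituting `ρ = 1 / (1 + τ)` turns `1 / ρ - 1` into `τ`, and the TPB density with `a = 1`,
times the Jacobian, into the Lomax density `b φ ^ b (τ + φ) ^ (-(b + 1))`. Integrating out `λ`
in the NEG hierarchy gives the same density, by a Gamma integral. -/

theorem integral_Ioo_zero_one_eq_integral_Ioi_inv_one_add {E : Type*} [NormedAddCommGroup E]
    [NormedSpace ℝ E] (f : ℝ → E) :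
    ∫ ρ in Set.Ioo (0 : ℝ) 1, f ρ = ∫ τ in Set.Ioi (0 : ℝ), ((1 + τ) ^ 2)⁻¹ • f (1 + τ)⁻¹ := by
  have himage : (fun τ : ℝ => (1 + τ)⁻¹) '' Set.Ioi 0 = Set.Ioo 0 1 := by
    ext ρ
    constructor
    · rintro ⟨τ, hτ : 0 < τ, rfl⟩
      exact ⟨by positivity, inv_lt_one_of_one_lt₀ (by linarith)⟩
    · rintro ⟨h0, h1⟩
      exact ⟨ρ⁻¹ - 1, sub_pos.mpr (one_lt_inv₀ h0 |>.mpr h1), by simp⟩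
  have hderiv : ∀ τ ∈ Set.Ioi (0 : ℝ),
      HasDerivWithinAt (fun t : ℝ => (1 + t)⁻¹) (-1 / (1 + τ) ^ 2) (Set.Ioi 0) τ :=
    fun τ (hτ : 0 < τ) => (((hasDerivAt_id τ).const_add 1).inv (by positivity)).hasDerivWithinAt
  have hinj : Set.InjOn (fun τ : ℝ => (1 + τ)⁻¹) (Set.Ioi 0) := fun _ _ _ _ h =>
    add_left_cancel (inv_injective h)
  rw [← himage, integral_image_eq_integral_abs_deriv_smul measurableSet_Ioi hderiv hinj]
  refine setIntegral_congr_fun measurableSet_Ioi fun τ _ => ?_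
  rw [neg_div, abs_neg, one_div, abs_of_nonneg (by positivity)]

noncomputable def lomaxPDF (b φ τ : ℝ) : ℝ :=
  b * φ ^ b * (τ + φ) ^ (-(b + 1))

theorem integral_mul_exp_neg_mul_gammaPDF {b φ τ : ℝ} (hb : 0 < b) (hτφ : 0 < τ + φ) :
    ∫ l in Set.Ioi (0 : ℝ), l * exp (-l * τ) * gammaPDF b φ l = lomaxPDF b φ τ := by
  have hintegrand : ∀ l ∈ Set.Ioi (0 : ℝ), l * exp (-l * τ) * gammaPDF b φ l =
      φ ^ b / Gamma b * (l ^ ((b + 1) - 1) * exp (-((τ + φ) * l))) := by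
    intro l (hl : 0 < l)
    rw [gammaPDF, add_sub_cancel_right, rpow_sub_one hl.ne',
      show -((τ + φ) * l) = -l * τ + -φ * l by ring, exp_add]
    field_simp
  rw [setIntegral_congr_fun measurableSet_Ioi hintegrand, integral_const_mul,
    integral_rpow_mul_exp_neg_mul_Ioi (by linarith) hτφ, Gamma_add_one hb.ne', one_div,
    inv_rpow hτφ.le, ← rpow_neg hτφ.le, lomaxPDF]
  field_simp [(Gamma_pos_of_pos hb).ne']

theorem inv_sq_mul_tpb_one_inv_one_add {b φ τ : ℝ} (hb : 0 < b) (hτ : 0 < 1 + τ) (hτφ : 0 ≤ τ + φ) :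
    ((1 + τ) ^ 2)⁻¹ * tpb 1 b φ (1 + τ)⁻¹ = lomaxPDF b φ τ := by
  have hbase : 1 + (φ - 1) * (1 + τ)⁻¹ = (τ + φ) / (1 + τ) := by field_simp; ring
  rw [tpb, hbase, add_comm 1 b, Gamma_add_one hb.ne', Gamma_one, sub_self, rpow_zero,
    div_rpow hτφ hτ.le, inv_rpow hτ.le, ← rpow_neg hτ.le, lomaxPDF]
  have hpow : ((1 + τ) ^ 2)⁻¹ * ((1 + τ) ^ (-(b - 1)) / (1 + τ) ^ (-(b + 1))) = 1 := by
    rw [← rpow_sub hτ, show -(b - 1) - -(b + 1) = (2 : ℝ) by ring, rpow_two,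
      inv_mul_cancel₀ (by positivity)]
  have hGamma : b * Gamma b / (1 * Gamma b) = b := by field_simp [(Gamma_pos_of_pos hb).ne']
  rw [hGamma]
  linear_combination (b * φ ^ b * (τ + φ) ^ (-(b + 1))) * hpow

/-- Corollary 1: the TPB normal scale mixture with a = 1 equals the
normal-exponential-gamma (NEG) prior θ | τ ~ N(0, τ), τ ~ Exponential(λ), λ ~ Gamma(b, φ). -/
theorem tpbn_a_one_eq_neg (b φ : ℝ) (hb : 0 < b) (hφ : 0 < φ) (θ : ℝ) :
    ∫ ρ in Set.Ioo (0 : ℝ) 1, normalPDF (1 / ρ - 1) θ * tpb 1 b φ ρ =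
      ∫ τ in Set.Ioi (0 : ℝ), ∫ l in Set.Ioi (0 : ℝ),
        normalPDF τ θ * (l * Real.exp (-l * τ)) * gammaPDF b φ l := by
  rw [integral_Ioo_zero_one_eq_integral_Ioi_inv_one_add]
  refine setIntegral_congr_fun measurableSet_Ioi fun τ (hτ : 0 < τ) => ?_
  simp_rw [mul_assoc (normalPDF τ θ)]
  rw [integral_const_mul, integral_mul_exp_neg_mul_gammaPDF hb (by linarith),
    ← inv_sq_mul_tpb_one_inv_one_add hb (by linarith) (by linarith), one_div, inv_inv, add_sub_cancel_left,
    smul_eq_mul, mul_left_comm]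
end

section
/- (Corollary 2, hyperprior equivalence.) The pushforward under the squaring map s ↦ s² of the standard half-Cauchy measure C⁺(0,1) (density s ↦ 2/(π(1+s²)) on (0,∞)) is the measure on (0,∞) with Lebesgue density φ ↦ ∫₀^∞ gammaPDF(1/2, ω)(φ) · gammaPDF(1/2, 1)(ω) dω = 1/(π √φ (1+φ)). That is, φ^(1/2) ~ C⁺(0,1) if and only if φ ~ Gamma(1/2, ω) mixed over ω ~ Gamma(1/2, 1). -/
/-!
As a function of `ω`, the product of the `Gamma(a, ω)` density at `φ` and the `Gamma(b, c)` density
at `ω` is an unnormalised `Gamma(a + b, c + φ)` density, so the mixture integral is a Gamma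
integral; for `a = b = 1/2`, `c = 1` it equals `1 / (π √φ (1 + φ))`. The pushforward statement is
the change of variables `φ = s²` on `(0, ∞)`: the Jacobian `2s` turns this density, evaluated at
`s²`, into the half-Cauchy density `2 / (π (1 + s²))`.
-/

open MeasureTheory Real

open Set
open scoped ENNReal

lemma gammaPDF_mul_gammaPDF (a b c φ : ℝ) {ω : ℝ} (hω : 0 < ω) :
    gammaPDF a ω φ * gammaPDF b c ω =
      c ^ b * φ ^ (a - 1) / (Gamma a * Gamma b) * (ω ^ (a + b - 1) * exp (-((c + φ) * ω))) := by
  have hpow : ω ^ a * ω ^ (b - 1) = ω ^ (a + b - 1) := by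
    rw [← rpow_add hω]
    ring_nf
  have hexp : exp (-ω * φ) * exp (-c * ω) = exp (-((c + φ) * ω)) := by
    rw [← exp_add]
    ring_nf
  simp only [gammaPDF]
  rw [← hpow, ← hexp]
  ring

theorem integral_gammaPDF_mul_gammaPDF {a b c φ : ℝ} (hab : 0 < a + b) (hcφ : 0 < c + φ) :
    ∫ ω in Ioi 0, gammaPDF a ω φ * gammaPDF b c ω =
      c ^ b * φ ^ (a - 1) * Gamma (a + b) / (Gamma a * Gamma b * (c + φ) ^ (a + b)) := by
  rw [setIntegral_congr_fun measurableSet_Ioi fun ω hω => gammaPDF_mul_gammaPDF a b c φ hω,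
    integral_const_mul, integral_rpow_mul_exp_neg_mul_Ioi hab hcφ,
    div_rpow zero_le_one hcφ.le, one_rpow]
  field_simp

theorem map_withDensity_abs_deriv_mul {s : Set ℝ} {f f' : ℝ → ℝ} (hs : MeasurableSet s)
    (hf : Measurable f) (hf' : ∀ x ∈ s, HasDerivWithinAt f (f' x) s x) (hinj : InjOn f s)
    (g : ℝ → ℝ≥0∞) :
    Measure.map f ((volume.restrict s).withDensity fun x => ENNReal.ofReal |f' x| * g (f x)) =
      (volume.restrict (f '' s)).withDensity g := by
  ext t ht
  rw [Measure.map_apply hf ht, withDensity_apply _ (hf ht), withDensity_apply _ ht,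
    Measure.restrict_restrict (hf ht), Measure.restrict_restrict ht, ← image_preimage_inter,
    lintegral_image_eq_lintegral_abs_deriv_mul ((hf ht).inter hs)
      (fun x hx => (hf' x hx.2).mono inter_subset_right) (hinj.mono inter_subset_right)]

lemma image_sq_Ioi_zero : (fun s : ℝ => s ^ 2) '' Ioi 0 = Ioi 0 := by
  refine Subset.antisymm (image_subset_iff.2 fun s (hs : 0 < s) => pow_pos hs 2) fun φ hφ => ?_
  exact ⟨√φ, sqrt_pos.2 hφ, sq_sqrt hφ.le⟩

theorem map_sq_withDensity_Ioi (g : ℝ → ℝ≥0∞) :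
    Measure.map (fun s : ℝ => s ^ 2)
        ((volume.restrict (Ioi 0)).withDensity fun s => ENNReal.ofReal (2 * s) * g (s ^ 2)) =
      (volume.restrict (Ioi 0)).withDensity g := by
  have hinj : InjOn (fun s : ℝ => s ^ 2) (Ioi 0) :=
    (pow_left_strictMonoOn₀ two_ne_zero).injOn.mono Ioi_subset_Ici_self
  have h := map_withDensity_abs_deriv_mul measurableSet_Ioi (continuous_pow 2).measurable
    (fun x _ => (hasDerivAt_pow 2 x).hasDerivWithinAt) hinj g
  rw [image_sq_Ioi_zero] at h
  rw [← h]
  congr 1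
  refine withDensity_congr_ae ((ae_restrict_mem measurableSet_Ioi).mono fun s (hs : 0 < s) => ?_)
  norm_num [abs_of_pos hs]

/-- Corollary 2, hyperprior equivalence: φ^(1/2) ~ C⁺(0,1) iff φ ~ Gamma(1/2, ω) mixed over
ω ~ Gamma(1/2, 1); the mixture density is 1/(π √φ (1+φ)). -/
theorem half_cauchy_hyperprior_equivalence :
    (∀ φ : ℝ, 0 < φ →
      ∫ ω in Set.Ioi (0 : ℝ), gammaPDF (1 / 2) ω φ * gammaPDF (1 / 2) 1 ω =
        1 / (Real.pi * Real.sqrt φ * (1 + φ))) ∧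
    Measure.map (fun s : ℝ => s ^ 2)
        ((volume.restrict (Set.Ioi (0 : ℝ))).withDensity fun s =>
          ENNReal.ofReal (2 / (Real.pi * (1 + s ^ 2)))) =
      (volume.restrict (Set.Ioi (0 : ℝ))).withDensity fun φ =>
        ENNReal.ofReal (1 / (Real.pi * Real.sqrt φ * (1 + φ))) := by
  refine ⟨fun φ hφ => ?_, ?_⟩
  · rw [integral_gammaPDF_mul_gammaPDF (by norm_num) (by linarith)]
    norm_num [Gamma_one_half_eq, rpow_neg hφ.le, ← sqrt_eq_rpow, mul_self_sqrt pi_pos.le]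
    field_simp
  · rw [← map_sq_withDensity_Ioi fun φ => ENNReal.ofReal (1 / (π * √φ * (1 + φ)))]
    congr 1
    refine withDensity_congr_ae ((ae_restrict_mem measurableSet_Ioi).mono fun s (hs : 0 < s) => ?_)
    dsimp only
    rw [← ENNReal.ofReal_mul (by positivity), sqrt_sq hs.le]
    congr 1
    field_simp
end

section
/- (Strawderman-Berger marginal density, case a = 1, b = 1/2, φ = 1.) For every real β, ∫₀¹ normalPDF(0, 1/ρ − 1)(β) · f(ρ; 1, 1/2, 1) dρ = 1/√(2π) − (|β|/2) e^(β²/2) + (β/2) e^(β²/2) Erf(β/√2), where Erf(x) = (2/√π) ∫₀^x e^(−t²) dt is the error function. -/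
/-!
Substituting `ρ = 1 - w²` (Jacobian `2w`) turns the integrand into
`e^{β²/2} / √(2π) · exp (-(a / w)²)` with `a = β / √2`: the factors `√(1 - w²)` coming from the
normal density and from the TPB density cancel. On `(0, 1]` the function
`w ↦ w exp (-(a / w)²) + √π a Erf (a / w)` is an antiderivative of `exp (-(a / w)²)`; it tends to
`√π |a|` as `w → 0⁺` because `Erf → ±1` at `±∞`, which produces the `|β|` term.
-/

open MeasureTheory Real

/-- The error function Erf(x) = (2/√π) ∫₀^x e^(−t²) dt. -/
noncomputable def erf (x : ℝ) : ℝ := 2 / Real.sqrt Real.pi * ∫ t in (0 : ℝ)..x, Real.exp (-t ^ 2)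

open Set Filter Topology

lemma hasDerivAt_erf (x : ℝ) : HasDerivAt erf (2 / √π * exp (-x ^ 2)) x :=
  ((by fun_prop : Continuous fun t : ℝ => exp (-t ^ 2)).integral_hasStrictDerivAt 0 x
    |>.hasDerivAt.const_mul _)

lemma erf_neg (x : ℝ) : erf (-x) = -erf x := by
  have h := intervalIntegral.integral_comp_neg (a := 0) (b := x) fun t => exp (-t ^ 2)
  simp only [neg_sq, neg_zero] at h
  rw [erf, erf, h, intervalIntegral.integral_symm, mul_neg]

lemma tendsto_erf_atTop : Tendsto erf atTop (𝓝 1) := by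
  have hgauss : ∫ t in Ioi (0 : ℝ), exp (-t ^ 2) = √π / 2 := by
    simpa using integral_gaussian_Ioi 1
  have h := intervalIntegral_tendsto_integral_Ioi 0
    (by simpa using (integrable_exp_neg_mul_sq one_pos).integrableOn) tendsto_id
  rw [hgauss] at h
  convert h.const_mul (2 / √π) using 2
  · rfl
  · field_simp

lemma tendsto_erf_atBot : Tendsto erf atBot (𝓝 (-1)) := by
  simpa [Function.comp_def, erf_neg] using (tendsto_erf_atTop.comp tendsto_neg_atBot_atTop).neg

lemma tendsto_mul_erf_div_nhdsGT_zero (a : ℝ) :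
    Tendsto (fun w => a * erf (a / w)) (𝓝[>] 0) (𝓝 |a|) := by
  simp only [div_eq_mul_inv]
  rcases lt_trichotomy a 0 with ha | rfl | ha
  · rw [abs_of_neg ha, ← mul_neg_one]
    exact (tendsto_erf_atBot.comp (tendsto_inv_nhdsGT_zero.const_mul_atTop_of_neg ha)).const_mul a
  · simp
  · rw [abs_of_pos ha]
    simpa using (tendsto_erf_atTop.comp (tendsto_inv_nhdsGT_zero.const_mul_atTop ha)).const_mul a

lemma hasDerivAt_mul_exp_neg_div_sq_add_mul_erf (a : ℝ) {w : ℝ} (hw : w ≠ 0) :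
    HasDerivAt (fun w => w * exp (-(a / w) ^ 2) + √π * (a * erf (a / w)))
      (exp (-(a / w) ^ 2)) w := by
  have hdiv : HasDerivAt (fun w => a / w) (-a / w ^ 2) w := by
    simpa using (hasDerivAt_const w a).fun_div (hasDerivAt_id w) hw
  have hexp := ((hdiv.fun_pow 2).fun_neg).exp
  have herf := (hasDerivAt_erf (a / w)).comp w hdiv
  refine (((hasDerivAt_id' w).mul hexp).add ((herf.const_mul a).const_mul √π)).congr_deriv ?_
  have : √π ≠ 0 := by positivity
  simp only [Nat.cast_ofNat, Nat.reduceSub, pow_one]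
  field_simp
  ring

lemma integral_Ioo_exp_neg_div_sq (a : ℝ) :
    ∫ w in Ioo (0 : ℝ) 1, exp (-(a / w) ^ 2) = exp (-a ^ 2) - √π * (|a| - a * erf a) := by
  set F : ℝ → ℝ := fun w => w * exp (-(a / w) ^ 2) + √π * (a * erf (a / w))
  have hF : ∀ w ∈ Ioo (0 : ℝ) 1, HasDerivAt F (exp (-(a / w) ^ 2)) w := fun w hw =>
    hasDerivAt_mul_exp_neg_div_sq_add_mul_erf a hw.1.ne'
  have hint : IntervalIntegrable (fun w => exp (-(a / w) ^ 2)) volume 0 1 := by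
    refine (intervalIntegrable_iff_integrableOn_Ioo_of_le zero_le_one).2 <|
      IntegrableOn.of_bound measure_Ioo_lt_top (by fun_prop) 1 ?_
    filter_upwards with w
    simpa [abs_exp] using neg_nonpos.2 (sq_nonneg (a / w))
  have hzero : Tendsto F (𝓝[>] 0) (𝓝 (0 + √π * |a|)) := by
    refine Tendsto.add ?_ ((tendsto_mul_erf_div_nhdsGT_zero a).const_mul √π)
    refine squeeze_zero' ?_ ?_ (tendsto_id.mono_left nhdsWithin_le_nhds)
    · filter_upwards [self_mem_nhdsWithin] with w (hw : 0 < w)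
      positivity
    · filter_upwards [self_mem_nhdsWithin] with w (hw : 0 < w)
      exact mul_le_of_le_one_right hw.le (exp_le_one_iff.2 (neg_nonpos.2 (sq_nonneg _)))
  have hone : Tendsto F (𝓝[<] 1) (𝓝 (F 1)) :=
    (hasDerivAt_mul_exp_neg_div_sq_add_mul_erf a one_ne_zero).continuousAt.continuousWithinAt
  rw [← integral_Ioc_eq_integral_Ioo, ← intervalIntegral.integral_of_le zero_le_one,
    intervalIntegral.integral_eq_sub_of_hasDerivAt_of_tendsto zero_lt_one hF hint hzero hone]
  simp only [F, div_one, one_mul]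
  ring

lemma image_one_sub_sq_Ioo : (fun w : ℝ => 1 - w ^ 2) '' Ioo 0 1 = Ioo 0 1 := by
  ext ρ
  constructor
  · rintro ⟨w, ⟨hw0, hw1⟩, rfl⟩
    constructor <;> nlinarith
  · rintro ⟨hρ0, hρ1⟩
    refine ⟨√(1 - ρ), ⟨by simpa using hρ1, ?_⟩, by simp [sq_sqrt (sub_nonneg.2 hρ1.le)]⟩
    rw [sqrt_lt' one_pos]
    linarith

lemma integral_Ioo_zero_one_eq_integral_comp_one_sub_sq {E : Type*} [NormedAddCommGroup E]
    [NormedSpace ℝ E] (g : ℝ → E) :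
    ∫ ρ in Ioo (0 : ℝ) 1, g ρ = ∫ w in Ioo (0 : ℝ) 1, (2 * w) • g (1 - w ^ 2) := by
  have hderiv : ∀ w ∈ Ioo (0 : ℝ) 1,
      HasDerivWithinAt (fun w => 1 - w ^ 2) (-(2 * w)) (Ioo (0 : ℝ) 1) w := fun w _ => by
    simpa using ((hasDerivAt_pow 2 w).const_sub 1).hasDerivWithinAt
  have hinj : InjOn (fun w : ℝ => 1 - w ^ 2) (Ioo 0 1) := fun u hu v hv huv => by
    simpa [hu.1.le, hv.1.le] using huv
  conv_lhs => rw [← image_one_sub_sq_Ioo]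
  rw [integral_image_eq_integral_abs_deriv_smul measurableSet_Ioo hderiv hinj]
  refine setIntegral_congr_fun measurableSet_Ioo fun w hw => ?_
  rw [abs_neg, abs_of_pos (by linarith [hw.1])]

lemma tpb_one_one_half_one {x : ℝ} (hx : 0 < x) : tpb 1 (1 / 2) 1 x = (2 * √x)⁻¹ := by
  have hΓ : Gamma (1 + 1 / 2) = √π / 2 := by
    rw [add_comm, Gamma_add_one (by norm_num), Gamma_one_half_eq]
    ring
  have hpow : x ^ ((1 : ℝ) / 2 - 1) = (√x)⁻¹ := by
    rw [show (1 : ℝ) / 2 - 1 = -(1 / 2) by norm_num, rpow_neg hx.le, sqrt_eq_rpow]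
  have : √π ≠ 0 := by positivity
  simp only [tpb, hΓ, Gamma_one, Gamma_one_half_eq, hpow, sub_self, rpow_zero, zero_mul, add_zero,
    one_rpow]
  field_simp

lemma normalPDF_of_pos {v : ℝ} (hv : 0 < v) (θ : ℝ) :
    normalPDF v θ = (√(2 * π * v))⁻¹ * exp (-θ ^ 2 / (2 * v)) := by
  rw [normalPDF, neg_div, rpow_neg (by positivity), ← sqrt_eq_rpow]

lemma smul_marginal_integrand_one_sub_sq (β : ℝ) {w : ℝ} (hw : w ∈ Ioo (0 : ℝ) 1) :
    (2 * w) • (normalPDF (1 / (1 - w ^ 2) - 1) β * tpb 1 (1 / 2) 1 (1 - w ^ 2)) =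
      exp (β ^ 2 / 2) / √(2 * π) * exp (-(β / √2 / w) ^ 2) := by
  obtain ⟨hw0, hw1⟩ := hw
  have hq : 0 < 1 - w ^ 2 := by nlinarith
  have hv : 1 / (1 - w ^ 2) - 1 = w ^ 2 / (1 - w ^ 2) := by
    field_simp
    ring
  have hsqrt : √(2 * π * (w ^ 2 / (1 - w ^ 2))) = √(2 * π) * w / √(1 - w ^ 2) := by
    rw [← mul_div_assoc, sqrt_div' _ hq.le, sqrt_mul' _ (sq_nonneg w), sqrt_sq hw0.le]
  have hexp : -β ^ 2 / (2 * (w ^ 2 / (1 - w ^ 2))) = β ^ 2 / 2 + -(β / √2 / w) ^ 2 := by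
    rw [div_pow, div_pow, sq_sqrt zero_le_two]
    field_simp
    ring
  rw [hv, normalPDF_of_pos (by positivity), tpb_one_one_half_one hq, hsqrt, hexp, exp_add,
    smul_eq_mul]
  have : √(1 - w ^ 2) ≠ 0 := by positivity
  field_simp

/-- Strawderman-Berger marginal density, case a = 1, b = 1/2, φ = 1. -/
theorem strawderman_berger_marginal_density (β : ℝ) :
    ∫ ρ in Set.Ioo (0 : ℝ) 1, normalPDF (1 / ρ - 1) β * tpb 1 (1 / 2) 1 ρ =
      1 / Real.sqrt (2 * Real.pi) - (|β| / 2) * Real.exp (β ^ 2 / 2) +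
        (β / 2) * Real.exp (β ^ 2 / 2) * erf (β / Real.sqrt 2) := by
  rw [integral_Ioo_zero_one_eq_integral_comp_one_sub_sq,
    setIntegral_congr_fun measurableSet_Ioo fun w => smul_marginal_integrand_one_sub_sq β,
    integral_const_mul, integral_Ioo_exp_neg_div_sq, div_pow, sq_sqrt zero_le_two, abs_div,
    abs_of_pos (sqrt_pos.2 zero_lt_two), sqrt_mul zero_le_two, mul_sub]
  have : √π ≠ 0 := by positivity
  have h2 : √2 * √2 = 2 := mul_self_sqrt zero_le_two
  have hexp : exp (β ^ 2 / 2) * exp (-(β ^ 2 / 2)) = 1 := by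
    rw [← exp_add, add_neg_cancel, exp_zero]
  field_simp
  linear_combination (2 * √2) * hexp + exp (β ^ 2 / 2) * √π * (|β| - β * erf (β / √2)) * h2
end

section
/- (Unboundedness of the horseshoe marginal at the origin.) The horseshoe marginal density π(β) = (1/(√2 · π^(3/2))) · e^(β²/2) · Γ(0, β²/2), where Γ(0, z) = ∫_z^∞ t^(−1) e^(−t) dt, tends to +∞ as β → 0 (β ≠ 0); that is, the marginal prior on β induced by the TPB normal scale mixture with a = b = 1/2, φ = 1 is unbounded at zero. -/
/-! For `0 < t ≤ 1` the integrand of `Γ(0, z)` is `e^(-t)/t ≥ e^(-1)/t`, so `Γ(0, z) ≥ -e^(-1) log z`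
blows up as `z → 0+`. The remaining factor `e^(β²/2)/(√2 π^(3/2))` tends to a positive constant. -/

open MeasureTheory Real Filter

/-- The upper incomplete gamma function Γ(s, z) = ∫_z^∞ t^(s−1) e^(−t) dt. -/
noncomputable def upperGamma (s z : ℝ) : ℝ := ∫ t in Set.Ioi z, t ^ (s - 1) * Real.exp (-t)

open Topology

lemma integrableOn_upperGamma_integrand (s : ℝ) {z : ℝ} (hz : 0 < z) :
    IntegrableOn (fun t : ℝ => t ^ (s - 1) * exp (-t)) (Set.Ioi z) := by
  refine integrable_of_isBigO_exp_neg one_half_pos ?_ ?_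
  · exact ((continuousOn_id.rpow_const fun t ht => Or.inl (hz.trans_le ht).ne').mul
      (continuous_exp.comp continuous_neg).continuousOn)
  · simpa only [mul_comm] using (Gamma_integrand_isLittleO (s - 1)).isBigO

lemma exp_neg_one_mul_neg_log_le_upperGamma_zero {z : ℝ} (hz : 0 < z) (hz1 : z ≤ 1) :
    exp (-1) * -log z ≤ upperGamma 0 z := by
  have integrand_eq : ∀ t : ℝ, t ^ ((0 : ℝ) - 1) * exp (-t) = exp (-t) * t⁻¹ := fun t => by
    rw [zero_sub, rpow_neg_one, mul_comm]
  have inv_integrable : IntegrableOn (fun t : ℝ => t⁻¹) (Set.Ioc z 1) :=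
    (intervalIntegrable_iff_integrableOn_Ioc_of_le hz1).1 <|
      intervalIntegral.intervalIntegrable_inv
        (fun t ht => (hz.trans_le (Set.uIcc_of_le hz1 ▸ ht).1).ne') continuousOn_id
  calc exp (-1) * -log z = ∫ t in Set.Ioc z 1, exp (-1) * t⁻¹ := by
        rw [integral_const_mul, ← intervalIntegral.integral_of_le hz1,
          integral_inv_of_pos hz one_pos, one_div, log_inv]
    _ ≤ ∫ t in Set.Ioc z 1, t ^ ((0 : ℝ) - 1) * exp (-t) := by
        refine setIntegral_mono_on (inv_integrable.const_mul _)
          ((integrableOn_upperGamma_integrand 0 hz).mono_set Set.Ioc_subset_Ioi_self)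
          measurableSet_Ioc fun t ht => ?_
        rw [integrand_eq]
        have : exp (-1) ≤ exp (-t) := exp_le_exp.2 (neg_le_neg ht.2)
        exact mul_le_mul_of_nonneg_right this (inv_nonneg.2 (hz.trans ht.1).le)
    _ ≤ upperGamma 0 z := by
        refine setIntegral_mono_set (integrableOn_upperGamma_integrand 0 hz) ?_
          Set.Ioc_subset_Ioi_self.eventuallyLE
        filter_upwards [ae_restrict_mem measurableSet_Ioi] with t ht
        rw [integrand_eq]
        have := hz.trans ht
        positivity

lemma tendsto_upperGamma_zero_nhdsGT_zero : Tendsto (upperGamma 0) (𝓝[>] 0) atTop := by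
  have neg_log : Tendsto (fun z => exp (-1) * -log z) (𝓝[>] 0) atTop :=
    (tendsto_neg_atBot_atTop.comp tendsto_log_nhdsGT_zero).const_mul_atTop (exp_pos _)
  refine tendsto_atTop_mono' _ ?_ neg_log
  filter_upwards [Ioo_mem_nhdsGT one_pos] with z hz
  exact exp_neg_one_mul_neg_log_le_upperGamma_zero hz.1 hz.2.le

lemma tendsto_sq_div_two_nhdsNE_zero : Tendsto (fun β : ℝ => β ^ 2 / 2) (𝓝[≠] 0) (𝓝[>] 0) := by
  refine tendsto_nhdsWithin_iff.2 ⟨?_, ?_⟩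
  · have : Continuous fun β : ℝ => β ^ 2 / 2 := by fun_prop
    exact (this.tendsto' 0 0 (by norm_num)).mono_left nhdsWithin_le_nhds
  · filter_upwards [self_mem_nhdsWithin] with β (hβ : β ≠ 0)
    exact Set.mem_Ioi.2 (by positivity)

/-- Unboundedness of the horseshoe marginal density at the origin. -/
theorem horseshoe_marginal_unbounded_at_zero :
    Tendsto
      (fun β : ℝ => (1 / (Real.sqrt 2 * Real.pi ^ ((3 : ℝ) / 2))) * Real.exp (β ^ 2 / 2) *
        upperGamma 0 (β ^ 2 / 2))
      (nhdsWithin 0 {(0 : ℝ)}ᶜ) atTop := by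
  set c := 1 / (Real.sqrt 2 * Real.pi ^ ((3 : ℝ) / 2))
  have hc : 0 < c := by positivity
  have prefactor : Tendsto (fun β : ℝ => c * exp (β ^ 2 / 2)) (𝓝[≠] 0) (𝓝 c) := by
    have : Continuous fun β : ℝ => c * exp (β ^ 2 / 2) := by fun_prop
    exact (this.tendsto' 0 c (by simp)).mono_left nhdsWithin_le_nhds
  exact prefactor.pos_mul_atTop hc
    (tendsto_upperGamma_zero_nhdsGT_zero.comp tendsto_sq_div_two_nhdsNE_zero)
end
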